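/- Let n ≥ 1, let ψ = n^{-1/2}(b₁ + ⋯ + b_n), let p ∈ [0,1], and let E = I − |ψ⟩⟨ψ|. Then the reliability equals exactly R_ψ(E) = 1 − p/n; i.e., the bound R_ψ(E) ≤ 1 − p/n is attained by the quantum measurement of I − |ψ⟩⟨ψ| at the uniform superposition ψ. -/

import Mathlib

open scoped InnerProductSpace
open MeasureTheory Finset

noncomputable section

abbrev Vn (n : ℕ) : Type := EuclideanSpace ℂ (Fin n)

/-- The standard orthonormal basis vector `b_k` of `ℂ^n`. -/
def basisVec (n : ℕ) (k : Fin n) : Vn n := EuclideanSpace.single k 1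

/-- The rank-one operator `|w⟩⟨v|`, i.e. `x ↦ ⟪v, x⟫ • w`. -/
def rankOne {n : ℕ} (v w : Vn n) : Vn n →L[ℂ] Vn n :=
  (innerSL ℂ v).smulRight w

/-- The diagonal part `diag E = ∑ₖ ⟪bₖ, E bₖ⟫ |bₖ⟩⟨bₖ|` of an operator `E`
in the standard basis. -/
def diagOp {n : ℕ} (E : Vn n →L[ℂ] Vn n) : Vn n →L[ℂ] Vn n :=
  ∑ k : Fin n, ⟪basisVec n k, E (basisVec n k)⟫_ℂ • rankOne (basisVec n k) (basisVec n k)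

/-- An effect: an operator `E` with `0 ≤ E ≤ I`
(both `E` and `I - E` positive semidefinite). -/
def IsEffect {n : ℕ} (E : Vn n →L[ℂ] Vn n) : Prop :=
  E.IsPositive ∧ (1 - E).IsPositive

/-- The reliability `R_ψ(E) = p⟪ψ, (diag E)ψ⟫ + (1-p)⟪ψ, (I-E)ψ⟫` of the yes–no
experiment with effect `E` for detecting a collapse (of probability `p`) onto the
standard basis, given initial wave function `ψ`. -/
def reliability {n : ℕ} (p : ℝ) (E : Vn n →L[ℂ] Vn n) (ψ : Vn n) : ℝ :=
  p * (⟪ψ, diagOp E ψ⟫_ℂ).re + (1 - p) * (⟪ψ, (1 - E) ψ⟫_ℂ).re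

/-! Here `I - E = |ψ⟩⟨ψ|` with `‖ψ‖ = 1`, so the second term of the reliability is `1 - p`, and the
diagonal entries of `E` are `1 - |ψₖ|²`, so `⟨ψ, (diag E) ψ⟩ = ∑ₖ (1 - |ψₖ|²) |ψₖ|²`.
For the uniform superposition every `|ψₖ|²` equals `1/n`, which gives `1 - 1/n`. -/

section

variable {n : ℕ}

lemma inner_basisVec_left (k : Fin n) (x : Vn n) : ⟪basisVec n k, x⟫_ℂ = x k := by
  simp [basisVec, EuclideanSpace.inner_single_left]

lemma inner_basisVec_right (k : Fin n) (x : Vn n) :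
    ⟪x, basisVec n k⟫_ℂ = starRingEnd ℂ (x k) := by
  rw [← inner_conj_symm, inner_basisVec_left]

lemma rankOne_apply (v w x : Vn n) : rankOne v w x = ⟪v, x⟫_ℂ • w := rfl

lemma inner_diagOp_self (E : Vn n →L[ℂ] Vn n) (ψ : Vn n) :
    ⟪ψ, diagOp E ψ⟫_ℂ = ∑ k, ⟪basisVec n k, E (basisVec n k)⟫_ℂ * ((‖ψ k‖ ^ 2 : ℝ) : ℂ) := by
  simp only [diagOp, _root_.sum_apply, smul_apply, rankOne_apply, inner_sum, inner_smul_right,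
    inner_basisVec_left, inner_basisVec_right, Complex.mul_conj', Complex.ofReal_pow]

lemma inner_basisVec_one_sub_rankOne_self (ψ : Vn n) (k : Fin n) :
    ⟪basisVec n k, (1 - rankOne ψ ψ) (basisVec n k)⟫_ℂ = 1 - ((‖ψ k‖ ^ 2 : ℝ) : ℂ) := by
  rw [sub_apply, one_apply_eq_self, inner_sub_right, rankOne_apply, inner_smul_right,
    inner_basisVec_left, inner_basisVec_right, inner_basisVec_left, Complex.conj_mul']
  simp [basisVec]

lemma reliability_one_sub_rankOne_self (p : ℝ) {ψ : Vn n} (hψ : ‖ψ‖ = 1) :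
    reliability p (1 - rankOne ψ ψ) ψ = p * ∑ k, (1 - ‖ψ k‖ ^ 2) * ‖ψ k‖ ^ 2 + (1 - p) := by
  have hproj : ⟪ψ, (1 - (1 - rankOne ψ ψ)) ψ⟫_ℂ = 1 := by
    rw [sub_sub_cancel, rankOne_apply, inner_smul_right, inner_self_eq_norm_sq_to_K, hψ]
    norm_num
  simp only [reliability, hproj, inner_diagOp_self, inner_basisVec_one_sub_rankOne_self]
  norm_cast
  simp

def uniformVec (n : ℕ) : Vn n := ((Real.sqrt n : ℝ) : ℂ)⁻¹ • ∑ k : Fin n, basisVec n k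

lemma uniformVec_apply (k : Fin n) : uniformVec n k = ((Real.sqrt n : ℝ) : ℂ)⁻¹ := by
  simp [uniformVec, basisVec]

lemma norm_uniformVec_apply_sq (k : Fin n) : ‖uniformVec n k‖ ^ 2 = (n : ℝ)⁻¹ := by
  rw [uniformVec_apply, norm_inv, Complex.norm_real, Real.norm_of_nonneg (Real.sqrt_nonneg _),
    inv_pow, Real.sq_sqrt n.cast_nonneg]

lemma norm_uniformVec (hn : n ≠ 0) : ‖uniformVec n‖ = 1 := by
  simp [EuclideanSpace.norm_eq, norm_uniformVec_apply_sq, hn]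

end

theorem stmt_5_general (n : ℕ) (hn : 1 ≤ n) (p : ℝ) :
    reliability p
      (1 - rankOne (((Real.sqrt n : ℝ) : ℂ)⁻¹ • ∑ k : Fin n, basisVec n k)
            (((Real.sqrt n : ℝ) : ℂ)⁻¹ • ∑ k : Fin n, basisVec n k))
      (((Real.sqrt n : ℝ) : ℂ)⁻¹ • ∑ k : Fin n, basisVec n k) = 1 - p / (n : ℝ) := by
  have hn0 : (n : ℝ) ≠ 0 := Nat.cast_ne_zero.mpr (by omega)
  change reliability p (1 - rankOne (uniformVec n) (uniformVec n)) (uniformVec n) = _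
  rw [reliability_one_sub_rankOne_self p (norm_uniformVec (by exact_mod_cast hn0))]
  simp only [norm_uniformVec_apply_sq, sum_const, card_univ, Fintype.card_fin, nsmul_eq_mul]
  field_simp
  ring

/-- For `n ≥ 1`, the uniform superposition `ψ = n^{-1/2}(b₁ + ⋯ + bₙ)`, any
`p ∈ [0,1]`, and the effect `E = I - |ψ⟩⟨ψ|`, the reliability equals exactly
`R_ψ(E) = 1 - p/n`; i.e., the bound `1 - p/n` is attained. -/
theorem stmt_5 (n : ℕ) (hn : 1 ≤ n) (p : ℝ) (hp : p ∈ Set.Icc (0 : ℝ) 1) :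
    reliability p
      (1 - rankOne (((Real.sqrt n : ℝ) : ℂ)⁻¹ • ∑ k : Fin n, basisVec n k)
            (((Real.sqrt n : ℝ) : ℂ)⁻¹ • ∑ k : Fin n, basisVec n k))
      (((Real.sqrt n : ℝ) : ℂ)⁻¹ • ∑ k : Fin n, basisVec n k) = 1 - p / (n : ℝ) :=
  stmt_5_general n hn p
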